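/- arXiv:2507.16320 — 3 statements merged into one kernel-verified Lean document; each statement's English description precedes it below -/
import Mathlib

section
/- For variables x_1,…,x_n and y_1,…,y_m with |x_i y_j| < 1 for all i, j, the Cauchy identity holds: ∑_λ s_λ(x_1,…,x_n) s_λ(y_1,…,y_m) = ∏_{i=1}^n ∏_{j=1}^m 1/(1 - x_i y_j), where the sum is over all partitions λ with at most min(n,m) parts. -/
/-!
The right-hand side expands, factor by factor, into geometric series: it is the sum over all
`n × m` matrices `A` of natural numbers of `∏ (x_i y_j) ^ A_ij`. The Robinson–Schensted–Knuth
correspondence, in Fomin's growth-diagram form, matches these matrices weight-preservingly with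
pairs of semistandard tableaux of a common shape with entries `< n` and `< m`.

A tableau of shape `λ` with entries `< n` is a chain `∅ = λ⁰ ⊆ ⋯ ⊆ λⁿ = λ` of horizontal strips
(`λᵏ` is the part filled with entries `< k`). Fill the grid `[0, n] × [0, m]` with partitions by a
local rule, starting from `∅` on the edges `i = 0` and `j = 0` and using `A_ij` at the box with
corner `(i, j)`. The two other edges are chains of horizontal strips ending at the same partition,
and the local rule can be run backwards, so this is a bijection. The rule adds `A_ij` to the size,
so the sizes along the edge `j = m` grow by the row sums of `A` and those along `i = n` by its
column sums: the two tableaux have the contents the monomial `∏ (x_i y_j) ^ A_ij` requires.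

Partitions are handled as their row-length functions `ℕ → ℕ`.
-/

open Finset

/-- The Schur polynomial `s_μ(x_0, …, x_{n-1})`: the sum over semistandard Young
tableaux of shape `μ` with entries in `{0, …, n-1}` of the monomials
`∏_{(i,j) ∈ μ} x_{T(i,j)}` (equivalently `∏_i x_i^{T_i}`). -/
noncomputable def schurPoly (μ : YoungDiagram) (n : ℕ) (x : ℕ → ℝ) : ℝ :=
  ∑' T : {T : SemistandardYoungTableau μ // ∀ c ∈ μ.cells, T.entry c.1 c.2 < n},
    ∏ c ∈ μ.cells, x (T.1.entry c.1 c.2)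

theorem summable_norm_and_prod_tsum_eq_tsum_pi {ι R : Type*} [Fintype ι] [NormedCommRing R]
    [CompleteSpace R] (f : ι → ℕ → R) (hf : ∀ i, Summable fun k => ‖f i k‖) :
    (Summable fun g : ι → ℕ => ‖∏ i, f i (g i)‖) ∧
      ∏ i, ∑' k, f i k = ∑' g : ι → ℕ, ∏ i, f i (g i) := by
  have key := Finite.induction_empty_option (P := fun κ => ∀ [Fintype κ] (f : κ → ℕ → R),
    (∀ i, Summable fun k => ‖f i k‖) → (Summable fun g : κ → ℕ => ‖∏ i, f i (g i)‖) ∧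
      ∏ i, ∑' k, f i k = ∑' g : κ → ℕ, ∏ i, f i (g i)) ?_ ?_ ?_ ι
  · exact key f hf
  · intro α β e ih _ f hf
    let := Fintype.ofEquiv β e.symm
    obtain ⟨hs, heq⟩ := ih (fun a => f (e a)) fun a => hf (e a)
    let E : (α → ℕ) ≃ (β → ℕ) := e.arrowCongr (Equiv.refl ℕ)
    have hprod : ∀ g : α → ℕ, ∏ b, f b (E g b) = ∏ a, f (e a) (g a) := fun g =>
      (Fintype.prod_equiv e _ _ fun a => by simp [E]).symm
    refine ⟨E.summable_iff.1 (by simpa only [Function.comp_def, hprod] using hs), ?_⟩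
    rw [← Fintype.prod_equiv e _ _ fun _ => rfl, heq, ← E.tsum_eq]
    simp only [hprod]
  · intro _ f _
    simp only [univ_eq_empty, prod_empty, tsum_const, Nat.card_unique, one_smul]
    exact ⟨Summable.of_finite, trivial⟩
  · intro α _ ih inst f hf
    obtain rfl : inst = instFintypeOption := Subsingleton.elim _ _
    obtain ⟨hs, heq⟩ := ih (fun a => f (some a)) fun a => hf (some a)
    let E : (Option α → ℕ) ≃ ℕ × (α → ℕ) := Equiv.piOptionEquivProd
    have hprod : ∀ g : Option α → ℕ,
        ∏ i, f i (g i) = f none (E g).1 * ∏ a, f (some a) ((E g).2 a) :=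
      fun g => Fintype.prod_option _
    refine ⟨?_, ?_⟩
    · simpa only [hprod, Function.comp_def] using E.summable_iff.2 ((hf none).mul_norm hs)
    · rw [Fintype.prod_option, heq, tsum_mul_tsum_of_summable_norm (hf none) hs, ← E.tsum_eq]
      simp only [hprod]

namespace YoungDiagram

theorem ext_rowLen {μ ν : YoungDiagram} (h : μ.rowLen = ν.rowLen) : μ = ν := by
  ext ⟨i, j⟩
  simp only [mem_cells, mem_iff_lt_rowLen, h]

def ofRowLen (f : ℕ → ℕ) (hf : Antitone f) (N : ℕ) : YoungDiagram :=
  ofRowLens ((List.range N).map f) <| List.sortedGE_iff_antitone_get.2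
    fun a b hab => by simpa using hf (Fin.le_iff_val_le_val.1 hab)

theorem mem_ofRowLen {f : ℕ → ℕ} {hf : Antitone f} {N : ℕ} (hN : ∀ i, N ≤ i → f i = 0)
    {i j : ℕ} : (i, j) ∈ ofRowLen f hf N ↔ j < f i := by
  rw [ofRowLen, mem_ofRowLens]
  simp only [List.length_map, List.length_range, List.getElem_map, List.getElem_range,
    exists_prop, and_iff_right_iff_imp]
  intro h
  by_contra! hi
  simp [hN i hi] at h

theorem rowLen_ofRowLen {f : ℕ → ℕ} {hf : Antitone f} {N : ℕ} (hN : ∀ i, N ≤ i → f i = 0) :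
    (ofRowLen f hf N).rowLen = f := by
  funext i
  exact eq_of_forall_lt_iff fun j => mem_iff_lt_rowLen.symm.trans (mem_ofRowLen hN)

end YoungDiagram

namespace RSK

open YoungDiagram

/-- `μ ⊆ ν` and `ν / μ` is a horizontal strip. -/
def Interlaces (μ ν : ℕ → ℕ) : Prop := (∀ k, μ k ≤ ν k) ∧ ∀ k, ν (k + 1) ≤ μ k

theorem interlaces_zero_left {ν : ℕ → ℕ} : Interlaces 0 ν ↔ ∀ k, ν (k + 1) = 0 := by
  simp [Interlaces]

theorem interlaces_self_of_antitone {μ : ℕ → ℕ} (h : Antitone μ) : Interlaces μ μ :=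
  ⟨fun _ => le_rfl, fun k => h k.le_succ⟩

theorem Interlaces.le {μ ν : ℕ → ℕ} (h : Interlaces μ ν) : μ ≤ ν := h.1

/-- Fomin's local rule for RSK at a box with corners `ρ ⊆ μ, ν` and label `a`: row `0` grows by
`a`, and row `k + 1` receives the `min (μ k) (ν k) - ρ k` cells bumped out of row `k`. -/
def growth (ρ μ ν : ℕ → ℕ) (a : ℕ) : ℕ → ℕ
  | 0 => max (μ 0) (ν 0) + a
  | k + 1 => max (μ (k + 1)) (ν (k + 1)) + (min (μ k) (ν k) - ρ k)

def growthBack (μ ν lam : ℕ → ℕ) (k : ℕ) : ℕ :=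
  min (μ k) (ν k) + max (μ (k + 1)) (ν (k + 1)) - lam (k + 1)

def growthLabel (μ ν lam : ℕ → ℕ) : ℕ := lam 0 - max (μ 0) (ν 0)

def size (R : ℕ) (f : ℕ → ℕ) : ℕ := ∑ k ∈ range R, f k

section LocalRules

variable {ρ μ ν lam : ℕ → ℕ} {a k : ℕ}

theorem growth_comm : growth ρ ν μ a = growth ρ μ ν a := by
  funext k; cases k <;> simp only [growth, max_comm, min_comm]

theorem interlaces_growth_left (hμ : Interlaces ρ μ) (hν : Interlaces ρ ν) :
    Interlaces μ (growth ρ μ ν a) := by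
  refine ⟨fun k => ?_, fun k => ?_⟩ <;> cases k <;>
    simp only [growth] <;> grind [Interlaces]

theorem interlaces_growth_right (hμ : Interlaces ρ μ) (hν : Interlaces ρ ν) :
    Interlaces ν (growth ρ μ ν a) :=
  growth_comm (ρ := ρ) ▸ interlaces_growth_left hν hμ

theorem growth_antitone (hμ : Interlaces ρ μ) (hν : Interlaces ρ ν) :
    Antitone (growth ρ μ ν a) := by
  refine antitone_nat_of_succ_le fun k => ?_
  cases k <;> simp only [growth] <;> grind [Interlaces]

theorem growth_succ_eq_zero (hμν : μ k = 0 ∨ ν k = 0) (hμ : μ (k + 1) = 0)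
    (hν : ν (k + 1) = 0) : growth ρ μ ν a (k + 1) = 0 := by
  simp only [growth]; omega

theorem growth_succ_add (hμ : Interlaces ρ μ) (hν : Interlaces ρ ν) :
    growth ρ μ ν a (k + 1) + ρ k = max (μ (k + 1)) (ν (k + 1)) + min (μ k) (ν k) := by
  have := hμ.1 k; have := hν.1 k
  simp only [growth]; omega

theorem interlaces_growthBack_left (hμ : Interlaces μ lam) (hν : Interlaces ν lam) :
    Interlaces (growthBack μ ν lam) μ := by
  refine ⟨fun k => ?_, fun k => ?_⟩ <;> simp only [growthBack] <;> grind [Interlaces]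

theorem interlaces_growthBack_right (hμ : Interlaces μ lam) (hν : Interlaces ν lam) :
    Interlaces (growthBack μ ν lam) ν := by
  refine ⟨fun k => ?_, fun k => ?_⟩ <;> simp only [growthBack] <;> grind [Interlaces]

theorem growth_growthBack (hμ : Interlaces μ lam) (hν : Interlaces ν lam) :
    growth (growthBack μ ν lam) μ ν (growthLabel μ ν lam) = lam := by
  funext k; cases k <;> simp only [growth, growthBack, growthLabel] <;> grind [Interlaces]

theorem growthBack_growth (hμ : Interlaces ρ μ) (hν : Interlaces ρ ν) :
    growthBack μ ν (growth ρ μ ν a) = ρ := by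
  funext k; simp only [growthBack, growth]; grind [Interlaces]

theorem growthLabel_growth : growthLabel μ ν (growth ρ μ ν a) = a := by
  simp only [growthLabel, growth]; omega

theorem size_growth (hμ : Interlaces ρ μ) (hν : Interlaces ρ ν) {R : ℕ} (hρ : ρ R = 0)
    (hμν : min (μ R) (ν R) = 0) :
    size (R + 1) (growth ρ μ ν a) + size (R + 1) ρ = a + size (R + 1) μ + size (R + 1) ν := by
  have hsucc : ∑ k ∈ range R, (growth ρ μ ν a (k + 1) + ρ k)
      = ∑ k ∈ range R, (max (μ (k + 1)) (ν (k + 1)) + min (μ k) (ν k)) :=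
    sum_congr rfl fun k _ => growth_succ_add hμ hν
  have hmaxmin : ∑ k ∈ range (R + 1), max (μ k) (ν k) + ∑ k ∈ range (R + 1), min (μ k) (ν k)
      = size (R + 1) μ + size (R + 1) ν := by
    rw [size, size, ← sum_add_distrib, ← sum_add_distrib]
    exact sum_congr rfl fun k _ => by omega
  rw [sum_add_distrib, sum_add_distrib] at hsucc
  have hmax := sum_range_succ' (fun k => max (μ k) (ν k)) R
  have hmin := sum_range_succ (fun k => min (μ k) (ν k)) R
  have hzero : growth ρ μ ν a 0 = max (μ 0) (ν 0) + a := rfl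
  simp only [size, sum_range_succ' (growth ρ μ ν a), sum_range_succ ρ R, hρ, hzero] at hmaxmin ⊢
  omega

end LocalRules

def grid (A : ℕ → ℕ → ℕ) : ℕ → ℕ → ℕ → ℕ
  | 0, _ => 0
  | _ + 1, 0 => 0
  | i + 1, j + 1 => growth (grid A i j) (grid A (i + 1) j) (grid A i (j + 1)) (A i j)

section Grid

variable (A : ℕ → ℕ → ℕ)

@[simp]
theorem grid_zero_left (j : ℕ) : grid A 0 j = 0 := by
  simp [grid]

@[simp]
theorem grid_zero_right (i : ℕ) : grid A i 0 = 0 := by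
  cases i <;> simp [grid]

theorem grid_succ_succ (i j : ℕ) :
    grid A (i + 1) (j + 1) = growth (grid A i j) (grid A (i + 1) j) (grid A i (j + 1)) (A i j) := by
  rw [grid]

theorem grid_transpose : ∀ i j, grid (fun i j => A j i) i j = grid A j i
  | 0, j => by simp
  | i + 1, 0 => by simp
  | i + 1, j + 1 => by
    rw [grid_succ_succ, grid_succ_succ, grid_transpose i j, grid_transpose (i + 1) j,
      grid_transpose i (j + 1), growth_comm]

theorem grid_eq_zero_of_min_le : ∀ i j k, min i j ≤ k → grid A i j k = 0
  | 0, j, k, _ => by simp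
  | i + 1, 0, k, _ => by simp
  | i + 1, j + 1, k + 1, h => by
    rw [grid_succ_succ]
    refine growth_succ_eq_zero ?_ (grid_eq_zero_of_min_le _ _ _ (by omega))
      (grid_eq_zero_of_min_le _ _ _ (by omega))
    rcases le_total i j with hij | hij
    · exact .inr (grid_eq_zero_of_min_le _ _ _ (by omega))
    · exact .inl (grid_eq_zero_of_min_le _ _ _ (by omega))
  | i + 1, j + 1, 0, h => by omega

theorem interlaces_grid : ∀ i j,
    Interlaces (grid A i j) (grid A (i + 1) j) ∧ Interlaces (grid A i j) (grid A i (j + 1))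
  | 0, j => by
    simp only [grid_zero_left, interlaces_zero_left]
    exact ⟨fun k => grid_eq_zero_of_min_le A _ _ _ (by omega), fun _ => rfl⟩
  | i + 1, 0 => by
    simp only [grid_zero_right, interlaces_zero_left]
    exact ⟨fun _ => rfl, fun k => grid_eq_zero_of_min_le A _ _ _ (by omega)⟩
  | i + 1, j + 1 => by
    rw [grid_succ_succ A (i + 1) j, grid_succ_succ A i (j + 1)]
    exact ⟨interlaces_growth_right (interlaces_grid (i + 1) j).1 (interlaces_grid (i + 1) j).2,
      interlaces_growth_left (interlaces_grid i (j + 1)).1 (interlaces_grid i (j + 1)).2⟩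
termination_by i j => i + j

theorem grid_antitone : ∀ i j, Antitone (grid A i j)
  | 0, _ | _ + 1, 0 => by simp only [grid_zero_left, grid_zero_right]; exact antitone_const
  | i + 1, j + 1 => by
    rw [grid_succ_succ]
    exact growth_antitone (interlaces_grid A i j).1 (interlaces_grid A i j).2

theorem size_grid_succ_left {R : ℕ} (i : ℕ) : ∀ j, min (i + 1) j ≤ R →
    size (R + 1) (grid A (i + 1) j) = size (R + 1) (grid A i j) + ∑ j' ∈ range j, A i j'
  | 0, _ => by simp
  | j + 1, h => by
    have hsize := size_growth (a := A i j) (interlaces_grid A i j).1 (interlaces_grid A i j).2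
      (grid_eq_zero_of_min_le A i j R (by omega))
      (by rw [grid_eq_zero_of_min_le A (i + 1) j R (by omega)]; simp)
    rw [← grid_succ_succ, size_grid_succ_left i j (by omega)] at hsize
    rw [sum_range_succ]
    omega

theorem size_grid_succ_right {R : ℕ} (i j : ℕ) (h : min i (j + 1) ≤ R) :
    size (R + 1) (grid A i (j + 1)) = size (R + 1) (grid A i j) + ∑ i' ∈ range i, A i' j := by
  simpa only [grid_transpose] using
    size_grid_succ_left (fun i j => A j i) j i (by rwa [min_comm])

theorem grid_congr {A' : ℕ → ℕ → ℕ} {n m : ℕ} (hA : ∀ i j, i < n → j < m → A i j = A' i j) :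
    ∀ i j, i ≤ n → j ≤ m → grid A i j = grid A' i j
  | 0, _, _, _ | _ + 1, 0, _, _ => by simp
  | i + 1, j + 1, hi, hj => by
    rw [grid_succ_succ, grid_succ_succ, grid_congr hA i j (by omega) (by omega),
      grid_congr hA (i + 1) j hi (by omega), grid_congr hA i (j + 1) (by omega) hj,
      hA i j hi hj]

end Grid

abbrev BoundedSSYT (μ : YoungDiagram) (n : ℕ) :=
  {T : SemistandardYoungTableau μ // ∀ c ∈ μ.cells, T.entry c.1 c.2 < n}

structure IsTableauChain (μ : YoungDiagram) (n : ℕ) (c : ℕ → ℕ → ℕ) : Prop where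
  interlaces : ∀ k, Interlaces (c k) (c (k + 1))
  zero : c 0 = 0
  eq_rowLen : ∀ k, n ≤ k → c k = μ.rowLen

def TableauChain (μ : YoungDiagram) (n : ℕ) := {c : ℕ → ℕ → ℕ // IsTableauChain μ n c}

section Tableaux

variable {μ : YoungDiagram} {n : ℕ} {c : ℕ → ℕ → ℕ}

theorem IsTableauChain.monotone (hc : IsTableauChain μ n c) : Monotone c :=
  monotone_nat_of_le_succ fun k => (hc.interlaces k).le

theorem IsTableauChain.antitone_apply (hc : IsTableauChain μ n c) (k : ℕ) : Antitone (c k) :=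
  antitone_nat_of_succ_le fun i => ((hc.interlaces k).1 (i + 1)).trans ((hc.interlaces k).2 i)

theorem IsTableauChain.le_rowLen (hc : IsTableauChain μ n c) (k : ℕ) : c k ≤ μ.rowLen :=
  hc.eq_rowLen (max k n) (le_max_right k n) ▸ hc.monotone (le_max_left k n)

/-- `chainOf T k i` is the number of entries `< k` in row `i` of `T`. -/
def chainOf (T : SemistandardYoungTableau μ) (k i : ℕ) : ℕ :=
  Nat.find (⟨μ.rowLen i, .inl le_rfl⟩ : ∃ j, μ.rowLen i ≤ j ∨ k ≤ T i j)

theorem lt_chainOf_iff (T : SemistandardYoungTableau μ) {k i j : ℕ} :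
    j < chainOf T k i ↔ j < μ.rowLen i ∧ T i j < k := by
  rw [chainOf, Nat.lt_find_iff]
  refine ⟨fun h => by simpa using h j le_rfl, fun ⟨hj, hT⟩ j' hj' => ?_⟩
  have := T.row_weak_of_le hj' (mem_iff_lt_rowLen.mpr hj)
  omega

theorem isTableauChain_chainOf (T : BoundedSSYT μ n) : IsTableauChain μ n (chainOf T.1) where
  interlaces k := by
    refine ⟨fun i => le_of_forall_lt fun j => ?_, fun i => le_of_forall_lt fun j => ?_⟩
    · simp only [lt_chainOf_iff]; omega
    · simp only [lt_chainOf_iff]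
      intro ⟨hj, hT⟩
      have := T.1.col_strict (i2 := i + 1) (Nat.lt_add_one i) (mem_iff_lt_rowLen.mpr hj)
      exact ⟨hj.trans_le (μ.rowLen_anti _ _ (Nat.le_add_right i 1)), by omega⟩
  zero := by
    funext i
    exact Nat.eq_zero_of_not_pos fun h => by simpa using (lt_chainOf_iff T.1).1 h
  eq_rowLen k hk := by
    funext i
    refine eq_of_forall_lt_iff fun j => (lt_chainOf_iff T.1).trans
      ⟨And.left, fun hj => ⟨hj, (T.2 (i, j) (mem_iff_lt_rowLen.mpr hj)).trans_le hk⟩⟩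

theorem chainOf_injective : Function.Injective (chainOf (μ := μ)) := by
  intro T T' h
  ext i j
  by_cases hcell : (i, j) ∈ μ
  · have hj := mem_iff_lt_rowLen.mp hcell
    refine eq_of_forall_gt_iff fun k => ?_
    simpa [lt_chainOf_iff, hj] using congrArg (fun c => j < c k i) h
  · rw [T.zeros hcell, T'.zeros hcell]

/-- The entry in cell `(i, j)` is the `k` with the cell in `c (k + 1)` but not in `c k`. -/
def entryOfChain (μ : YoungDiagram) (n : ℕ) (c : ℕ → ℕ → ℕ) (i j : ℕ) : ℕ :=
  if (i, j) ∈ μ then Nat.find (⟨n, .inl le_rfl⟩ : ∃ k, n ≤ k ∨ j < c (k + 1) i) else 0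

theorem lt_entryOfChain_iff (hc : IsTableauChain μ n c) {i j : ℕ} (hcell : (i, j) ∈ μ) {k : ℕ} :
    k < entryOfChain μ n c i j ↔ k < n ∧ c (k + 1) i ≤ j := by
  rw [entryOfChain, if_pos hcell, Nat.lt_find_iff]
  refine ⟨fun h => by simpa using h k le_rfl, fun ⟨hk, hc'⟩ k' hk' => ?_⟩
  have : c (k' + 1) i ≤ c (k + 1) i := hc.monotone (Nat.add_le_add_right hk' 1) i
  omega

theorem entryOfChain_lt (hc : IsTableauChain μ n c) {i j : ℕ} (hcell : (i, j) ∈ μ) :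
    entryOfChain μ n c i j < n := by
  have hrow := mem_iff_lt_rowLen.mp hcell
  obtain _ | n := n
  · simp [← hc.eq_rowLen 0 le_rfl, hc.zero] at hrow
  · by_contra! h
    have := ((lt_entryOfChain_iff hc hcell).1 (Nat.lt_add_one n |>.trans_le h)).2
    rw [hc.eq_rowLen (n + 1) le_rfl] at this
    omega

theorem IsTableauChain.lt_iff (hc : IsTableauChain μ n c) {k i j : ℕ} :
    j < c k i ↔ j < μ.rowLen i ∧ entryOfChain μ n c i j < k := by
  constructor
  · intro hj
    have hrow : j < μ.rowLen i := hj.trans_le (hc.le_rowLen k i)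
    refine ⟨hrow, lt_of_not_ge fun hk => ?_⟩
    obtain _ | k := k
    · simp [hc.zero] at hj
    · have := ((lt_entryOfChain_iff hc (mem_iff_lt_rowLen.mpr hrow)).1 hk).2
      omega
  · rintro ⟨hrow, hk⟩
    have hcell := mem_iff_lt_rowLen.mpr hrow
    have hcovered := (lt_entryOfChain_iff hc hcell).not.1 (lt_irrefl _)
    have : c (entryOfChain μ n c i j + 1) i ≤ c k i := hc.monotone hk i
    have := entryOfChain_lt hc hcell
    omega

def tabOf (c : TableauChain μ n) : BoundedSSYT μ n where
  val :=
    { entry := entryOfChain μ n c.1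
      row_weak' := fun {i j₁ j₂} hj hcell => le_of_forall_lt fun k => by
        rw [lt_entryOfChain_iff c.2 hcell,
          lt_entryOfChain_iff c.2 (μ.up_left_mem le_rfl hj.le hcell)]
        omega
      col_strict' := fun {i₁ i₂ j} hi hcell => by
        have hj := c.2.lt_iff.2 ⟨μ.mem_iff_lt_rowLen.1 hcell, Nat.lt_add_one _⟩
        have : c.1 (entryOfChain μ n c.1 i₂ j + 1) i₂ ≤ c.1 (entryOfChain μ n c.1 i₂ j) i₁ :=
          (c.2.antitone_apply _ hi).trans ((c.2.interlaces _).2 i₁)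
        exact (c.2.lt_iff.1 (hj.trans_le this)).2
      zeros' := fun hcell => if_neg hcell }
  property cell hcell := entryOfChain_lt c.2 hcell

theorem chainOf_tabOf (c : TableauChain μ n) : chainOf (tabOf c).1 = c.1 := by
  funext k i
  exact eq_of_forall_lt_iff fun j => (lt_chainOf_iff _).trans c.2.lt_iff.symm

def chainEquiv : BoundedSSYT μ n ≃ TableauChain μ n where
  toFun T := ⟨chainOf T.1, isTableauChain_chainOf T⟩
  invFun := tabOf
  left_inv _ := Subtype.ext (chainOf_injective (chainOf_tabOf _))
  right_inv c := Subtype.ext (chainOf_tabOf c)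

instance : Finite (BoundedSSYT μ n) :=
  Finite.of_injective (fun T (c : μ.cells) => (⟨T.1 c.1.1 c.1.2, T.2 c.1 c.2⟩ : Fin n))
    fun T T' h =>
    Subtype.ext <| SemistandardYoungTableau.ext fun i j => by
      by_cases hcell : (i, j) ∈ μ
      · simpa using congrArg Fin.val (congrFun h ⟨(i, j), hcell⟩)
      · rw [T.1.zeros hcell, T'.1.zeros hcell]

theorem card_filter_lt_eq_size (T : SemistandardYoungTableau μ) {R : ℕ}
    (hR : ∀ c ∈ μ.cells, c.1 < R) (k : ℕ) :
    #{c ∈ μ.cells | T c.1 c.2 < k} = size R (chainOf T k) := by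
  rw [card_eq_sum_card_fiberwise (f := Prod.fst) (t := range R)
    (fun c hc => mem_range.2 (hR c (mem_filter.1 hc).1)), size]
  refine sum_congr rfl fun i _ => ?_
  have : {c ∈ {c ∈ μ.cells | T c.1 c.2 < k} | c.1 = i} = {i} ×ˢ range (chainOf T k i) := by
    ext ⟨i', j⟩
    simp only [mem_filter, mem_product, mem_singleton, mem_range, lt_chainOf_iff,
      mem_cells, mem_iff_lt_rowLen]
    grind
  rw [this, card_product, card_singleton, card_range, one_mul]

def monomial {M : Type*} [CommMonoid M] (x : ℕ → M) (T : SemistandardYoungTableau μ) : M :=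
  ∏ c ∈ μ.cells, x (T c.1 c.2)

theorem monomial_eq_prod_pow {M : Type*} [CommMonoid M] (x : ℕ → M) (T : BoundedSSYT μ n)
    {R : ℕ} (hR : ∀ c ∈ μ.cells, c.1 < R) :
    monomial x T.1
      = ∏ k ∈ range n, x k ^ (size R (chainOf T.1 (k + 1)) - size R (chainOf T.1 k)) := by
  rw [monomial, ← prod_fiberwise_of_maps_to (g := fun c => T.1 c.1 c.2) (t := range n)
    fun c hc => mem_range.2 (T.2 c hc)]
  refine prod_congr rfl fun k _ => ?_
  rw [prod_congr rfl fun c hc => congrArg x (mem_filter.1 hc).2, prod_const,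
    ← card_filter_lt_eq_size T.1 hR, ← card_filter_lt_eq_size T.1 hR]
  have hsplit : #{c ∈ μ.cells | T.1 c.1 c.2 < k + 1}
      = #{c ∈ μ.cells | T.1 c.1 c.2 < k} + #{c ∈ μ.cells | T.1 c.1 c.2 = k} := by
    rw [← card_union_of_disjoint (disjoint_filter.2 fun _ _ h => h.ne), ← filter_or]
    exact congrArg card (filter_congr fun _ _ => Nat.lt_succ_iff_lt_or_eq)
  rw [hsplit, Nat.add_sub_cancel_left]

end Tableaux

/-- The growth diagram on `[0, n] × [0, m]` reconstructed backwards from its edges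
`(i, m) ↦ X i` and `(n, j) ↦ Y j`. -/
def gridOfBoundary (n m : ℕ) (X Y : ℕ → ℕ → ℕ) (i j : ℕ) : ℕ → ℕ :=
  if i < n ∧ j < m then
    growthBack (gridOfBoundary n m X Y (i + 1) j) (gridOfBoundary n m X Y i (j + 1))
      (gridOfBoundary n m X Y (i + 1) (j + 1))
  else if i < n then X i else Y j
termination_by (n - i) + (m - j)

def matrixOfBoundary (n m : ℕ) (X Y : ℕ → ℕ → ℕ) (i j : ℕ) : ℕ :=
  growthLabel (gridOfBoundary n m X Y (i + 1) j) (gridOfBoundary n m X Y i (j + 1))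
    (gridOfBoundary n m X Y (i + 1) (j + 1))

section Boundary

variable {n m : ℕ} {X Y : ℕ → ℕ → ℕ}

theorem gridOfBoundary_of_lt {i j : ℕ} (hi : i < n) (hj : j < m) :
    gridOfBoundary n m X Y i j = growthBack (gridOfBoundary n m X Y (i + 1) j)
      (gridOfBoundary n m X Y i (j + 1)) (gridOfBoundary n m X Y (i + 1) (j + 1)) := by
  rw [gridOfBoundary, if_pos ⟨hi, hj⟩]

theorem gridOfBoundary_top (j : ℕ) : gridOfBoundary n m X Y n j = Y j := by
  rw [gridOfBoundary]; simp

theorem gridOfBoundary_right (hXY : X n = Y m) {i : ℕ} (hi : i ≤ n) :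
    gridOfBoundary n m X Y i m = X i := by
  rcases hi.lt_or_eq with hi | rfl
  · rw [gridOfBoundary]; simp [hi]
  · rw [gridOfBoundary_top, hXY]

theorem gridOfBoundary_grid (A : ℕ → ℕ → ℕ) (hX : ∀ i ≤ n, X i = grid A i m)
    (hY : ∀ j ≤ m, Y j = grid A n j) (i j : ℕ) (hi : i ≤ n) (hj : j ≤ m) :
    gridOfBoundary n m X Y i j = grid A i j := by
  by_cases h : i < n ∧ j < m
  · rw [gridOfBoundary_of_lt h.1 h.2, gridOfBoundary_grid A hX hY (i + 1) j h.1 hj,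
      gridOfBoundary_grid A hX hY i (j + 1) hi h.2,
      gridOfBoundary_grid A hX hY (i + 1) (j + 1) h.1 h.2, grid_succ_succ]
    exact growthBack_growth (interlaces_grid A i j).1 (interlaces_grid A i j).2
  · rcases hi.lt_or_eq with hi | rfl
    · rw [show j = m by omega,
        gridOfBoundary_right ((hX n le_rfl).trans (hY m le_rfl).symm) hi.le, hX i hi.le]
    · rw [gridOfBoundary_top, hY j hj]
termination_by (n - i) + (m - j)

theorem matrixOfBoundary_grid (A : ℕ → ℕ → ℕ) (hX : ∀ i ≤ n, X i = grid A i m)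
    (hY : ∀ j ≤ m, Y j = grid A n j) {i j : ℕ} (hi : i < n) (hj : j < m) :
    matrixOfBoundary n m X Y i j = A i j := by
  rw [matrixOfBoundary, gridOfBoundary_grid A hX hY _ _ hi hj.le,
    gridOfBoundary_grid A hX hY _ _ hi.le hj, gridOfBoundary_grid A hX hY _ _ hi hj,
    grid_succ_succ, growthLabel_growth]

variable {μ : YoungDiagram}

theorem IsTableauChain.last_eq (hX : IsTableauChain μ n X) (hY : IsTableauChain μ m Y) :
    X n = Y m :=
  (hX.eq_rowLen n le_rfl).trans (hY.eq_rowLen m le_rfl).symm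

theorem interlaces_gridOfBoundary (hX : IsTableauChain μ n X) (hY : IsTableauChain μ m Y)
    (i j : ℕ) (hi : i ≤ n) (hj : j ≤ m) :
    (i < n → Interlaces (gridOfBoundary n m X Y i j) (gridOfBoundary n m X Y (i + 1) j)) ∧
      (j < m → Interlaces (gridOfBoundary n m X Y i j) (gridOfBoundary n m X Y i (j + 1))) := by
  by_cases h : i < n ∧ j < m
  · have h₁ := (interlaces_gridOfBoundary hX hY (i + 1) j h.1 hj).2 h.2
    have h₂ := (interlaces_gridOfBoundary hX hY i (j + 1) hi h.2).1 h.1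
    rw [gridOfBoundary_of_lt h.1 h.2]
    exact ⟨fun _ => interlaces_growthBack_left h₁ h₂, fun _ => interlaces_growthBack_right h₁ h₂⟩
  · rcases hi.lt_or_eq with hi | rfl
    · obtain rfl : j = m := by omega
      refine ⟨fun _ => ?_, by omega⟩
      rw [gridOfBoundary_right (hX.last_eq hY) hi.le,
        gridOfBoundary_right (hX.last_eq hY) hi]
      exact hX.interlaces i
    · refine ⟨by omega, fun _ => ?_⟩
      rw [gridOfBoundary_top, gridOfBoundary_top]
      exact hY.interlaces j
termination_by (n - i) + (m - j)

theorem gridOfBoundary_zero_left (hX : IsTableauChain μ n X) (hY : IsTableauChain μ m Y) {j : ℕ}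
    (hj : j ≤ m) : gridOfBoundary n m X Y 0 j = 0 := by
  induction hj using Nat.decreasingInduction with
  | self => rw [gridOfBoundary_right (hX.last_eq hY) n.zero_le, hX.zero]
  | of_succ j hj ih =>
    have := ((interlaces_gridOfBoundary hX hY 0 j n.zero_le hj.le).2 hj).le
    rw [ih] at this
    exact le_antisymm this bot_le

theorem gridOfBoundary_zero_right (hX : IsTableauChain μ n X) (hY : IsTableauChain μ m Y)
    {i : ℕ} (hi : i ≤ n) : gridOfBoundary n m X Y i 0 = 0 := by
  induction hi using Nat.decreasingInduction with
  | self => rw [gridOfBoundary_top, hY.zero]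
  | of_succ i hi ih =>
    have := ((interlaces_gridOfBoundary hX hY i 0 hi.le m.zero_le).1 hi).le
    rw [ih] at this
    exact le_antisymm this bot_le

theorem grid_matrixOfBoundary (hX : IsTableauChain μ n X) (hY : IsTableauChain μ m Y) :
    ∀ i j, i ≤ n → j ≤ m → grid (matrixOfBoundary n m X Y) i j = gridOfBoundary n m X Y i j
  | 0, j, _, hj => by rw [grid_zero_left, gridOfBoundary_zero_left hX hY hj]
  | i + 1, 0, hi, _ => by rw [grid_zero_right, gridOfBoundary_zero_right hX hY hi]
  | i + 1, j + 1, hi, hj => by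
    rw [grid_succ_succ, grid_matrixOfBoundary hX hY i j (by omega) (by omega),
      grid_matrixOfBoundary hX hY (i + 1) j hi (by omega),
      grid_matrixOfBoundary hX hY i (j + 1) (by omega) hj, matrixOfBoundary,
      gridOfBoundary_of_lt (by omega) (by omega)]
    exact growth_growthBack ((interlaces_gridOfBoundary hX hY (i + 1) j hi (by omega)).2 hj)
      ((interlaces_gridOfBoundary hX hY i (j + 1) (by omega) hj).1 hi)

end Boundary

section Correspondence

variable {n m : ℕ}

def extendByZero (A : Matrix (Fin n) (Fin m) ℕ) (i j : ℕ) : ℕ :=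
  if h : i < n ∧ j < m then A ⟨i, h.1⟩ ⟨j, h.2⟩ else 0

@[simp]
theorem extendByZero_apply (A : Matrix (Fin n) (Fin m) ℕ) (i : Fin n) (j : Fin m) :
    extendByZero A i j = A i j := by
  simp [extendByZero]

variable (n m) in
abbrev Shape := {μ : YoungDiagram // ∀ c ∈ μ.cells, c.1 < min n m}

def shape (A : Matrix (Fin n) (Fin m) ℕ) : Shape n m :=
  ⟨ofRowLen (grid (extendByZero A) n m) (grid_antitone _ n m) (min n m), fun c hc => by
    by_contra! h
    have := (mem_ofRowLen (grid_eq_zero_of_min_le _ n m)).1 hc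
    rw [grid_eq_zero_of_min_le _ n m _ h] at this
    omega⟩

theorem rowLen_shape (A : Matrix (Fin n) (Fin m) ℕ) :
    (shape A).1.rowLen = grid (extendByZero A) n m :=
  rowLen_ofRowLen (hf := grid_antitone _ n m) (grid_eq_zero_of_min_le _ n m)

def xChain (A : Matrix (Fin n) (Fin m) ℕ) (k : ℕ) : ℕ → ℕ := grid (extendByZero A) (min k n) m

def yChain (A : Matrix (Fin n) (Fin m) ℕ) (k : ℕ) : ℕ → ℕ := grid (extendByZero A) n (min k m)

theorem isTableauChain_xChain (A : Matrix (Fin n) (Fin m) ℕ) :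
    IsTableauChain (shape A).1 n (xChain A) where
  interlaces k := by
    rcases lt_or_ge k n with h | h
    · simpa [xChain, h.le, Nat.succ_le_of_lt h] using (interlaces_grid _ k m).1
    · simpa [xChain, h, h.trans k.le_succ] using interlaces_self_of_antitone (grid_antitone _ n m)
  zero := by simp [xChain]
  eq_rowLen k hk := by rw [xChain, min_eq_right hk, rowLen_shape]

theorem isTableauChain_yChain (A : Matrix (Fin n) (Fin m) ℕ) :
    IsTableauChain (shape A).1 m (yChain A) where
  interlaces k := by
    rcases lt_or_ge k m with h | h
    · simpa [yChain, h.le, Nat.succ_le_of_lt h] using (interlaces_grid _ n k).2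
    · simpa [yChain, h, h.trans k.le_succ] using interlaces_self_of_antitone (grid_antitone _ n m)
  zero := by simp [yChain]
  eq_rowLen k hk := by rw [yChain, min_eq_right hk, rowLen_shape]

theorem sigma_chains_ext {t t' : Σ μ : Shape n m, TableauChain μ.1 n × TableauChain μ.1 m}
    (hX : t.2.1.1 = t'.2.1.1) (hY : t.2.2.1 = t'.2.2.1) : t = t' := by
  obtain ⟨⟨μ, hμ⟩, ⟨X, hX'⟩, ⟨Y, hY'⟩⟩ := t
  obtain ⟨⟨μ', hμ'⟩, ⟨X', hX''⟩, ⟨Y', hY''⟩⟩ := t'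
  dsimp only at hX hY
  subst hX hY
  obtain rfl : μ = μ' := ext_rowLen <|
    (hX'.eq_rowLen n le_rfl).symm.trans (hX''.eq_rowLen n le_rfl)
  rfl

theorem grid_extendByZero_matrixOfBoundary {μ : YoungDiagram} {X Y : ℕ → ℕ → ℕ}
    (hX : IsTableauChain μ n X) (hY : IsTableauChain μ m Y) {i j : ℕ} (hi : i ≤ n) (hj : j ≤ m) :
    grid (extendByZero (Matrix.of fun (i : Fin n) (j : Fin m) => matrixOfBoundary n m X Y i j))
      i j = gridOfBoundary n m X Y i j := by
  rw [grid_congr _ (A' := matrixOfBoundary n m X Y) (fun i j hi hj => by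
    simp [extendByZero, hi, hj]) i j hi hj, grid_matrixOfBoundary hX hY i j hi hj]

variable (n m) in
def rskChains :
    Matrix (Fin n) (Fin m) ℕ ≃ Σ μ : Shape n m, TableauChain μ.1 n × TableauChain μ.1 m where
  toFun A := ⟨shape A, ⟨xChain A, isTableauChain_xChain A⟩, ⟨yChain A, isTableauChain_yChain A⟩⟩
  invFun t := Matrix.of fun i j => matrixOfBoundary n m t.2.1.1 t.2.2.1 i j
  left_inv A := by
    ext i j
    exact (matrixOfBoundary_grid (X := xChain A) (Y := yChain A) _
      (fun i hi => by rw [xChain, min_eq_left hi]) (fun j hj => by rw [yChain, min_eq_left hj])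
      i.2 j.2).trans (extendByZero_apply A i j)
  right_inv := fun ⟨μ, ⟨X, hX⟩, ⟨Y, hY⟩⟩ => by
    refine sigma_chains_ext (funext fun k => ?_) (funext fun k => ?_)
    · dsimp only
      rw [xChain, grid_extendByZero_matrixOfBoundary hX hY (min_le_right k n) le_rfl,
        gridOfBoundary_right (hX.last_eq hY) (min_le_right k n)]
      rcases le_total k n with h | h
      · rw [min_eq_left h]
      · rw [min_eq_right h, hX.eq_rowLen n le_rfl, hX.eq_rowLen k h]
    · dsimp only
      rw [yChain, grid_extendByZero_matrixOfBoundary hX hY le_rfl (min_le_right k m),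
        gridOfBoundary_top]
      rcases le_total k m with h | h
      · rw [min_eq_left h]
      · rw [min_eq_right h, hY.eq_rowLen m le_rfl, hY.eq_rowLen k h]

variable (n m) in
def rsk : Matrix (Fin n) (Fin m) ℕ ≃ Σ μ : Shape n m, BoundedSSYT μ.1 n × BoundedSSYT μ.1 m :=
  (rskChains n m).trans (Equiv.sigmaCongrRight fun _ => (chainEquiv.prodCongr chainEquiv).symm)

theorem size_xChain_succ (A : Matrix (Fin n) (Fin m) ℕ) {k : ℕ} (hk : k < n) :
    size (min n m + 1) (xChain A (k + 1))
      = size (min n m + 1) (xChain A k) + ∑ j : Fin m, A ⟨k, hk⟩ j := by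
  rw [xChain, xChain, min_eq_left (a := k + 1) hk, min_eq_left (a := k) hk.le,
    size_grid_succ_left _ k m (by omega), ← Fin.sum_univ_eq_sum_range]
  simp [extendByZero, hk]

theorem size_yChain_succ (A : Matrix (Fin n) (Fin m) ℕ) {k : ℕ} (hk : k < m) :
    size (min n m + 1) (yChain A (k + 1))
      = size (min n m + 1) (yChain A k) + ∑ i : Fin n, A i ⟨k, hk⟩ := by
  rw [yChain, yChain, min_eq_left (a := k + 1) hk, min_eq_left (a := k) hk.le,
    size_grid_succ_right _ n k (by omega), ← Fin.sum_univ_eq_sum_range]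
  simp [extendByZero, hk]

theorem monomial_rsk {M : Type*} [CommMonoid M] (x y : ℕ → M) (A : Matrix (Fin n) (Fin m) ℕ) :
    monomial x (rsk n m A).2.1.1 * monomial y (rsk n m A).2.2.1
      = ∏ i : Fin n, ∏ j : Fin m, (x i * y j) ^ A i j := by
  have hrows : ∀ c ∈ (rsk n m A).1.1.cells, c.1 < min n m + 1 :=
    fun c hc => ((rsk n m A).1.2 c hc).trans (Nat.lt_add_one _)
  have hX : chainOf (rsk n m A).2.1.1 = xChain A :=
    congrArg Subtype.val (chainEquiv.apply_symm_apply _)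
  have hY : chainOf (rsk n m A).2.2.1 = yChain A :=
    congrArg Subtype.val (chainEquiv.apply_symm_apply _)
  rw [monomial_eq_prod_pow x _ hrows, monomial_eq_prod_pow y _ hrows, hX, hY,
    ← Fin.prod_univ_eq_prod_range, ← Fin.prod_univ_eq_prod_range]
  simp only [size_xChain_succ A (Fin.is_lt _), size_yChain_succ A (Fin.is_lt _),
    Nat.add_sub_cancel_left, Fin.eta, ← prod_pow_eq_pow_sum, mul_pow, prod_mul_distrib]
  exact congrArg _ prod_comm

end Correspondence

end RSK

/-- The Cauchy identity: for `|x_i y_j| < 1`,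
`∑_λ s_λ(x) s_λ(y) = ∏_{i<n} ∏_{j<m} 1/(1 - x_i y_j)`, the sum ranging over all
partitions (Young diagrams) with at most `min n m` parts (rows). -/
theorem cauchy_identity (n m : ℕ) (x y : ℕ → ℝ)
    (h : ∀ i j, i < n → j < m → |x i * y j| < 1) :
    ∑' μ : {μ : YoungDiagram // ∀ c ∈ μ.cells, c.1 < min n m},
      schurPoly μ.1 n x * schurPoly μ.1 m y
    = ∏ i ∈ range n, ∏ j ∈ range m, (1 - x i * y j)⁻¹ := by
  open RSK in
  let e := (Equiv.curry (Fin n) (Fin m) ℕ).trans (rsk n m)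
  let w : (Σ μ : Shape n m, BoundedSSYT μ.1 n × BoundedSSYT μ.1 m) → ℝ :=
    fun t => monomial x t.2.1.1 * monomial y t.2.2.1
  have hw : ∀ g, w (e g) = ∏ p : Fin n × Fin m, (x p.1 * y p.2) ^ g p := fun g =>
    (monomial_rsk x y _).trans
      (Fintype.prod_prod_type fun p : Fin n × Fin m => (x p.1 * y p.2) ^ g p).symm
  have hgeom : ∀ p : Fin n × Fin m, Summable fun k => ‖(x p.1 * y p.2) ^ k‖ := fun p => by
    simpa [norm_pow] using summable_geometric_of_lt_one (abs_nonneg _) (h p.1 p.2 p.1.2 p.2.2)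
  obtain ⟨hsum, hprod⟩ := summable_norm_and_prod_tsum_eq_tsum_pi _ hgeom
  have hwsum : Summable w := e.summable_iff.1 <| by
    simpa only [Function.comp_def, hw] using hsum.of_norm
  calc _ = ∑' μ : Shape n m, ∑' T : BoundedSSYT μ.1 n × BoundedSSYT μ.1 m, w ⟨μ, T⟩ :=
        tsum_congr fun μ => tsum_mul_tsum_of_summable_norm .of_finite .of_finite
    _ = ∑' g, w (e g) := hwsum.tsum_sigma.symm.trans (e.tsum_eq w).symm
    _ = ∏ p : Fin n × Fin m, (1 - x p.1 * y p.2)⁻¹ := by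
        rw [tsum_congr hw, ← hprod]
        exact prod_congr rfl fun p _ => tsum_geometric_of_abs_lt_one (h p.1 p.2 p.1.2 p.2.2)
    _ = _ := by
        rw [Fintype.prod_prod_type, ← Fin.prod_univ_eq_prod_range]
        exact prod_congr rfl fun i _ => Fin.prod_univ_eq_prod_range (fun j => (1 - x i * y j)⁻¹) m
end

section
/- Let A = (a_{ij}) be an n×n matrix of nonnegative integers that is lower triangular (a_{ij} = 0 for j > i), and let B be the symmetric matrix defined by b_{ij} = b_{ji} = a_{max(i,j),min(i,j)}. Then the maximum over all down-right lattice paths π from (1,1) to (n,n) of ∑_{(r,t)∈π} a_{r,t} equals the maximum over all such paths of ∑_{(r,t)∈π} b_{r,t}. -/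
/-- A single step of a down-right path: increase one coordinate by 1. -/
def DRStep (p q : ℕ × ℕ) : Prop := q = (p.1 + 1, p.2) ∨ q = (p.1, p.2 + 1)

/-- A down-right lattice path from `(1,1)` to `(n,m)` (1-based coordinates). -/
def IsDRPath (n m : ℕ) (π : List (ℕ × ℕ)) : Prop :=
  π.head? = some (1, 1) ∧ π.getLast? = some (n, m) ∧ π.Chain' DRStep

/-- The weight of a path: sum of matrix entries along it. -/
def pathWeight (w : ℕ → ℕ → ℕ) (π : List (ℕ × ℕ)) : ℕ :=
  (π.map fun p => w p.1 p.2).sum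

/-! Pointwise `a ≤ b`, because `b` agrees with `a` on and below the diagonal and `a` vanishes
above it; so the `a`-weight of every path is at most its `b`-weight. Conversely, folding a path
across the diagonal, `(i, j) ↦ (max i j, min i j)`, gives a down-right path with the same end point
`(n, n)` whose `a`-weight is the `b`-weight of the original path. The two sets of path weights thus
dominate each other, which forces equal suprema (even for the junk values of `sSup` on `ℕ`). -/

def foldDiag (p : ℕ × ℕ) : ℕ × ℕ := (max p.1 p.2, min p.1 p.2)

lemma DRStep.foldDiag {p q : ℕ × ℕ} (h : DRStep p q) : DRStep (foldDiag p) (foldDiag q) := by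
  rcases h with rfl | rfl <;> simp only [DRStep, _root_.foldDiag, Prod.ext_iff] <;> omega

lemma IsDRPath.map_foldDiag {n m : ℕ} {π : List (ℕ × ℕ)} (h : IsDRPath n m π) :
    IsDRPath (max n m) (min n m) (π.map foldDiag) := by
  obtain ⟨hhead, hlast, hchain⟩ := h
  refine ⟨?_, ?_, ?_⟩
  · simp [List.head?_map, hhead, foldDiag]
  · simp [List.getLast?_map, hlast, foldDiag]
  · exact List.isChain_map_of_isChain foldDiag (fun _ _ => DRStep.foldDiag) hchain

lemma pathWeight_map_foldDiag (w : ℕ → ℕ → ℕ) (π : List (ℕ × ℕ)) :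
    pathWeight w (π.map foldDiag) = pathWeight (fun i j => w (max i j) (min i j)) π := by
  simp only [pathWeight, List.map_map]
  rfl

lemma pathWeight_mono {w w' : ℕ → ℕ → ℕ} (h : ∀ i j, w i j ≤ w' i j) (π : List (ℕ × ℕ)) :
    pathWeight w π ≤ pathWeight w' π :=
  List.sum_le_sum fun p _ => h p.1 p.2

lemma le_apply_max_min_of_lowerTriangular {a : ℕ → ℕ → ℕ} (hlt : ∀ i j, i < j → a i j = 0)
    (i j : ℕ) : a i j ≤ a (max i j) (min i j) := by
  rcases le_or_gt j i with h | h
  · simp [max_eq_left h, min_eq_right h]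
  · simp [hlt i j h]

/-- For a lower triangular nonnegative-integer matrix `a` and its symmetrization
`b i j = a (max i j) (min i j)`, the LPP times from `(1,1)` to `(n,n)` coincide. -/
theorem lpp_lowerTriangular_eq_lpp_symmetrization (n : ℕ) (a : ℕ → ℕ → ℕ)
    (hlt : ∀ i j, i < j → a i j = 0) :
    sSup {s | ∃ π, IsDRPath n n π ∧ s = pathWeight a π} =
    sSup {s | ∃ π, IsDRPath n n π ∧
      s = pathWeight (fun i j => a (max i j) (min i j)) π} := by
  apply csSup_eq_csSup_of_forall_exists_le
  · rintro _ ⟨π, hπ, rfl⟩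
    exact ⟨_, ⟨π, hπ, rfl⟩, pathWeight_mono (le_apply_max_min_of_lowerTriangular hlt) π⟩
  · rintro _ ⟨π, hπ, rfl⟩
    refine ⟨_, ⟨π.map foldDiag, ?_, rfl⟩, (pathWeight_map_foldDiag a π).ge⟩
    simpa using hπ.map_foldDiag
end

section
/- Let (i_1,j_1), (i_2,j_2), …, (i_N,j_N) be the biword (lexicographically ordered list of positions with multiplicity) associated to a matrix A of nonnegative integers, i.e., each position (i,j) appears a_{ij} times, ordered first by i then by j. Then the length of a longest nondecreasing subsequence of the word (j_1,…,j_N) equals the last passage percolation time max_π ∑_{(r,t)∈π} a_{r,t} over down-right paths π from (1,1) to (n,m). -/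
/-- The biword of an `n×m` nonnegative integer matrix: each position `(i,j)`
(1-based) is listed `a i j` times, in lexicographic order (first by `i`,
then by `j`). -/
def biword (n m : ℕ) (a : ℕ → ℕ → ℕ) : List (ℕ × ℕ) :=
  (List.range n).flatMap fun i => (List.range m).flatMap fun j =>
    List.replicate (a (i + 1) (j + 1)) (i + 1, j + 1)

open List

theorem biword_eq_flatMap (n m : ℕ) (a : ℕ → ℕ → ℕ) :
    biword n m a = (range' 1 n).flatMap fun i => (range' 1 m).flatMap fun j =>
      replicate (a i j) (i, j) := by
  simp only [biword, range'_eq_map_range, flatMap_map]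
  simp [add_comm]

theorem countP_biword (n m : ℕ) (a : ℕ → ℕ → ℕ) (P : ℕ × ℕ → Bool) :
    (biword n m a).countP P = ∑ x ∈ Finset.Icc (1, 1) (n, m) with P x, a x.1 x.2 := by
  rw [Finset.sum_filter, Finset.Icc_prod_def, Finset.sum_product, biword_eq_flatMap,
    ← List.toFinset_range'_1_1, ← List.toFinset_range'_1_1, sum_toFinset _ nodup_range']
  simp only [countP_flatMap, countP_replicate, Function.comp_def, sum_toFinset _ nodup_range']

theorem mem_Icc_of_mem_biword {n m : ℕ} {a : ℕ → ℕ → ℕ} {x : ℕ × ℕ}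
    (hx : x ∈ biword n m a) : x ∈ Set.Icc (1, 1) (n, m) := by
  simp only [biword_eq_flatMap, mem_flatMap, mem_replicate, mem_range'_1] at hx
  obtain ⟨i, hi, j, hj, -, rfl⟩ := hx
  simp only [Set.mem_Icc, Prod.mk_le_mk]
  omega

theorem pairwise_toLex_le_biword (n m : ℕ) (a : ℕ → ℕ → ℕ) :
    (biword n m a).Pairwise fun x y => toLex x ≤ toLex y := by
  rw [biword_eq_flatMap, pairwise_flatMap]
  refine ⟨fun i _ => pairwise_flatMap.2 ⟨fun j _ => ?_, ?_⟩, ?_⟩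
  · exact pairwise_replicate.2 (Or.inr le_rfl)
  · refine (pairwise_lt_range' (s := 1) (n := m)).imp fun hjj' x hx y hy => ?_
    rw [(mem_replicate.1 hx).2, (mem_replicate.1 hy).2]
    exact Prod.Lex.toLex_strictMono (Prod.mk_lt_mk_of_le_of_lt le_rfl hjj') |>.le
  · refine (pairwise_lt_range' (s := 1) (n := n)).imp fun hii' x hx y hy => ?_
    simp only [mem_flatMap, mem_replicate] at hx hy
    obtain ⟨j, -, -, rfl⟩ := hx
    obtain ⟨j', -, -, rfl⟩ := hy
    exact (Prod.Lex.toLex_lt_toLex.2 (Or.inl hii')).le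

/-- `IsDRPath n m` unfolds to `IsDRPathFromTo (1, 1) (n, m)`. -/
def IsDRPathFromTo (p q : ℕ × ℕ) (π : List (ℕ × ℕ)) : Prop :=
  π.head? = some p ∧ π.getLast? = some q ∧ π.IsChain DRStep

theorem DRStep.lt {p q : ℕ × ℕ} (h : DRStep p q) : p < q := by
  rcases h with rfl | rfl
  · exact Prod.mk_lt_mk_of_lt_of_le (Nat.lt_succ_self _) le_rfl
  · exact Prod.mk_lt_mk_of_le_of_lt le_rfl (Nat.lt_succ_self _)

theorem DRStep.isDRPathFromTo {p q : ℕ × ℕ} (h : DRStep p q) : IsDRPathFromTo p q [p, q] :=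
  ⟨rfl, rfl, isChain_pair.2 h⟩

namespace IsDRPathFromTo

variable {p q r : ℕ × ℕ} {π : List (ℕ × ℕ)}

theorem exists_eq_cons (h : IsDRPathFromTo p q π) : ∃ t, π = p :: t :=
  head?_eq_some_iff.1 h.1

theorem mem_last (h : IsDRPathFromTo p q π) : q ∈ π := mem_of_getLast? h.2.1

theorem pairwise_lt (h : IsDRPathFromTo p q π) : π.Pairwise (· < ·) :=
  isChain_iff_pairwise.1 (h.2.2.imp fun _ _ => DRStep.lt)

theorem nodup (h : IsDRPathFromTo p q π) : π.Nodup := h.pairwise_lt.nodup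

theorem le_total_of_mem (h : IsDRPathFromTo p q π) {x y : ℕ × ℕ} (hx : x ∈ π) (hy : y ∈ π) :
    x ≤ y ∨ y ≤ x := by
  rcases eq_or_ne x y with rfl | hxy
  · exact Or.inl le_rfl
  · have : Std.Symm fun x y : ℕ × ℕ => x ≤ y ∨ y ≤ x := ⟨fun _ _ => Or.symm⟩
    have hR : π.Pairwise fun x y : ℕ × ℕ => x ≤ y ∨ y ≤ x := h.pairwise_lt.imp (Or.inl ·.le)
    exact hR.forall hx hy hxy

theorem mem_Icc (h : IsDRPathFromTo p q π) {x : ℕ × ℕ} (hx : x ∈ π) : x ∈ Set.Icc p q := by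
  have hle : π.Pairwise (· ≤ ·) := h.pairwise_lt.imp le_of_lt
  constructor
  · obtain ⟨t, rfl⟩ := h.exists_eq_cons
    rcases mem_cons.1 hx with rfl | hx
    · exact le_rfl
    · exact (pairwise_cons.1 hle).1 x hx
  · obtain ⟨s, rfl⟩ := getLast?_eq_some_iff.1 h.2.1
    rcases mem_append.1 hx with hx | hx
    · exact (pairwise_append.1 hle).2.2 x hx q (mem_singleton_self q)
    · exact (mem_singleton.1 hx).le

theorem append {t : List (ℕ × ℕ)} (h₁ : IsDRPathFromTo p q π)
    (h₂ : IsDRPathFromTo q r (q :: t)) : IsDRPathFromTo p r (π ++ t) := by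
  obtain ⟨s, rfl⟩ := h₁.exists_eq_cons
  refine ⟨rfl, ?_, h₁.2.2.append (isChain_cons.1 h₂.2.2).2 ?_⟩
  · have hlast := h₂.2.1
    rw [getLast?_cons] at hlast
    rw [getLast?_append, h₁.2.1]
    cases ht : t.getLast? <;> simpa [ht] using hlast
  · simpa [h₁.2.1] using (isChain_cons.1 h₂.2.2).1

end IsDRPathFromTo

theorem exists_isDRPathFromTo {p q : ℕ × ℕ} (h : p ≤ q) : ∃ π, IsDRPathFromTo p q π := by
  obtain ⟨d, hd⟩ : ∃ d, q.1 - p.1 + (q.2 - p.2) = d := ⟨_, rfl⟩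
  induction d generalizing p with
  | zero =>
    obtain rfl : p = q := le_antisymm h (Prod.mk_le_mk.2 (by omega))
    exact ⟨[p], rfl, rfl, isChain_singleton p⟩
  | succ d ih =>
    obtain ⟨p', hstep, hp'q, hd'⟩ : ∃ p', DRStep p p' ∧ p' ≤ q ∧ q.1 - p'.1 + (q.2 - p'.2) = d := by
      rw [Prod.le_def] at h
      by_cases h₁ : p.1 < q.1
      · exact ⟨(p.1 + 1, p.2), Or.inl rfl, Prod.mk_le_mk.2 (by omega), by dsimp only; omega⟩
      · exact ⟨(p.1, p.2 + 1), Or.inr rfl, Prod.mk_le_mk.2 (by omega), by dsimp only; omega⟩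
    obtain ⟨π, hπ⟩ := ih hp'q hd'
    obtain ⟨t, rfl⟩ := hπ.exists_eq_cons
    exact ⟨[p, p'] ++ t, hstep.isDRPathFromTo.append hπ⟩

theorem exists_isDRPathFromTo_superset {p e : ℕ × ℕ} {c : List (ℕ × ℕ)} (hpe : p ≤ e)
    (hc : c.Pairwise (· ≤ ·)) (hbounds : ∀ x ∈ c, x ∈ Set.Icc p e) :
    ∃ π, IsDRPathFromTo p e π ∧ c ⊆ π := by
  induction c generalizing p with
  | nil => exact (exists_isDRPathFromTo hpe).imp fun _ h => ⟨h, nil_subset _⟩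
  | cons q c ih =>
    obtain ⟨hpq, hqe⟩ := hbounds q mem_cons_self
    obtain ⟨π₁, hπ₁⟩ := exists_isDRPathFromTo hpq
    obtain ⟨π₂, hπ₂, hcπ₂⟩ := ih hqe (pairwise_cons.1 hc).2
      fun x hx => ⟨(pairwise_cons.1 hc).1 x hx, (hbounds x (mem_cons_of_mem q hx)).2⟩
    obtain ⟨t, rfl⟩ := hπ₂.exists_eq_cons
    have hq : q ∈ π₁ ++ t := mem_append_left t hπ₁.mem_last
    refine ⟨π₁ ++ t, hπ₁.append hπ₂, cons_subset.2 ⟨hq, fun x hx => ?_⟩⟩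
    rcases mem_cons.1 (hcπ₂ hx) with rfl | hxt
    · exact hq
    · exact mem_append_right π₁ hxt

theorem IsDRPathFromTo.sum_eq_countP_biword {n m : ℕ} {π : List (ℕ × ℕ)}
    (hπ : IsDRPathFromTo (1, 1) (n, m) π) (a : ℕ → ℕ → ℕ) :
    (π.map fun x => a x.1 x.2).sum = (biword n m a).countP (· ∈ π) := by
  rw [countP_biword, ← sum_toFinset _ hπ.nodup]
  congr 1
  ext x
  simp only [Finset.mem_filter, Finset.mem_Icc, mem_toFinset, decide_eq_true_eq]
  exact ⟨fun hx => ⟨hπ.mem_Icc hx, hx⟩, And.right⟩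

theorem exists_nondecreasing_sublist_length_eq {n m : ℕ} {a : ℕ → ℕ → ℕ}
    {π : List (ℕ × ℕ)} (hπ : IsDRPathFromTo (1, 1) (n, m) π) :
    ∃ l : List ℕ, l <+ (biword n m a).map Prod.snd ∧ l.Pairwise (· ≤ ·) ∧
      l.length = (π.map fun x => a x.1 x.2).sum := by
  refine ⟨((biword n m a).filter (· ∈ π)).map Prod.snd, filter_sublist.map _, ?_, ?_⟩
  · refine pairwise_map.2 (((pairwise_toLex_le_biword n m a).filter _).imp_of_mem ?_)
    intro x y hx hy hxy
    simp only [mem_filter, decide_eq_true_eq] at hx hy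
    rcases hπ.le_total_of_mem hx.2 hy.2 with hle | hle
    · exact hle.2
    · -- on a path the lexicographic and the product order agree
      obtain rfl : x = y := toLex.injective (le_antisymm hxy (Prod.Lex.toLex_mono hle))
      exact le_rfl
  · rw [length_map, ← countP_eq_length_filter, hπ.sum_eq_countP_biword]

theorem exists_isDRPathFromTo_length_le {n m : ℕ} {a : ℕ → ℕ → ℕ} {l : List ℕ}
    (hl : l <+ (biword n m a).map Prod.snd) (hmono : l.Pairwise (· ≤ ·)) (hne : l ≠ []) :
    ∃ π, IsDRPathFromTo (1, 1) (n, m) π ∧ l.length ≤ (π.map fun x => a x.1 x.2).sum := by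
  obtain ⟨c, hc, rfl⟩ := sublist_map_iff.1 hl
  have hchain : c.Pairwise (· ≤ ·) :=
    (((pairwise_toLex_le_biword n m a).sublist hc).and (pairwise_map.1 hmono)).imp
      fun h => Prod.mk_le_mk.2 ⟨(Prod.Lex.toLex_le_toLex'.1 h.1).1, h.2⟩
  have hbounds : ∀ x ∈ c, x ∈ Set.Icc (1, 1) (n, m) := fun x hx =>
    mem_Icc_of_mem_biword (hc.subset hx)
  obtain ⟨x, hx⟩ := exists_mem_of_ne_nil c (by simpa using hne)
  obtain ⟨π, hπ, hcπ⟩ := exists_isDRPathFromTo_superset ((hbounds x hx).1.trans (hbounds x hx).2)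
    hchain hbounds
  refine ⟨π, hπ, ?_⟩
  calc (c.map Prod.snd).length = c.countP (· ∈ π) := by
        rw [length_map, countP_eq_length.2 fun x hx => decide_eq_true (hcπ hx)]
    _ ≤ (biword n m a).countP (· ∈ π) := hc.countP_le
    _ = (π.map fun x => a x.1 x.2).sum := (hπ.sum_eq_countP_biword a).symm

/-- The length of a longest nondecreasing subsequence of the bottom row of the
biword of `a` equals the last passage percolation time over down-right paths
from `(1,1)` to `(n,m)`. -/
theorem longest_nondecreasing_subseq_eq_lpp (n m : ℕ) (a : ℕ → ℕ → ℕ) :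
    sSup {k | ∃ l : List ℕ, l.Sublist ((biword n m a).map Prod.snd) ∧
      l.Pairwise (· ≤ ·) ∧ k = l.length} =
    sSup {s | ∃ π, IsDRPath n m π ∧ s = (π.map fun p => a p.1 p.2).sum} := by
  have hbddL : BddAbove {k | ∃ l : List ℕ, l.Sublist ((biword n m a).map Prod.snd) ∧
      l.Pairwise (· ≤ ·) ∧ k = l.length} :=
    ⟨_, by rintro _ ⟨l, hl, -, rfl⟩; exact hl.length_le⟩
  have hbddR : BddAbove {s | ∃ π, IsDRPath n m π ∧ s = (π.map fun p => a p.1 p.2).sum} :=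
    ⟨(biword n m a).length, by
      rintro _ ⟨π, hπ, rfl⟩
      exact (IsDRPathFromTo.sum_eq_countP_biword hπ a).trans_le countP_le_length⟩
  apply le_antisymm
  · refine csSup_le' ?_
    rintro _ ⟨l, hl, hmono, rfl⟩
    rcases eq_or_ne l [] with rfl | hne
    · exact Nat.zero_le _
    obtain ⟨π, hπ, hle⟩ := exists_isDRPathFromTo_length_le hl hmono hne
    exact hle.trans (le_csSup hbddR ⟨π, hπ, rfl⟩)
  · refine csSup_le' ?_
    rintro _ ⟨π, hπ, rfl⟩
    obtain ⟨l, hl, hmono, hlen⟩ := exists_nondecreasing_sublist_length_eq (a := a) hπ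
    exact le_csSup hbddL ⟨l, hl, hmono, hlen.symm⟩
end
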